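/- Decreasing majorant preserving the Dini condition (the reduction (2.4), Lemma 2.10 of Dong–Lee–Kim used as a standing assumption). Let ω : (0,1] → [0,∞) be nondecreasing with ∫₀¹ ω(t)/t dt < ∞, and let β ∈ (0,1). Define ω̃(t) = t^β · sup_{t ≤ s ≤ 1} ω(s) s^{−β} for t ∈ (0,1]. Then: (i) ω(t) ≤ ω̃(t) for all t ∈ (0,1]; (ii) t ↦ ω̃(t)/t^β is nonincreasing on (0,1]; and (iii) there is a constant C depending only on β such that ∫₀¹ ω̃(t)/t dt ≤ C ( ∫₀¹ ω(t)/t dt + ω(1) ); in particular ω̃ also satisfies the Dini condition. -/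

import Mathlib

open MeasureTheory Metric Set
open scoped ENNReal NNReal Topology

noncomputable section

abbrev Rn (n : ℕ) : Type := EuclideanSpace ℝ (Fin n)
abbrev Rm (m : ℕ) : Type := EuclideanSpace ℝ (Fin m)

/-- mean oscillation of `h` over the set `D` at scale `r`. -/
def mo {n : ℕ} {F : Type*} [NormedAddCommGroup F] [NormedSpace ℝ F]
    (h : Rn n → F) (D : Set (Rn n)) (r : ℝ) : ℝ :=
  ⨆ x ∈ D, ⨍ y in D ∩ Metric.ball x r, ‖h y - ⨍ z in D ∩ Metric.ball x r, h z‖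

/-- `h` is of Dini mean oscillation on `D`. -/
def DiniMO {n : ℕ} {F : Type*} [NormedAddCommGroup F] [NormedSpace ℝ F]
    (h : Rn n → F) (D : Set (Rn n)) : Prop :=
  MeasureTheory.IntegrableOn (fun t => mo h D t / t) (Set.Ioo (0:ℝ) 1)

/-- view the coefficient tensor as a single Euclidean-space-valued map. -/
def tensorize {n m : ℕ} (A : Fin n → Fin n → Fin m → Fin m → Rn n → ℝ) :
    Rn n → EuclideanSpace ℝ (Fin n × Fin n × Fin m × Fin m) :=
  fun y => WithLp.toLp 2 (fun p : Fin n × Fin n × Fin m × Fin m => A p.1 p.2.1 p.2.2.1 p.2.2.2 y)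

/-- an integer lattice point of `ℝⁿ`. -/
def zlat {n : ℕ} (z : Fin n → ℤ) : Rn n := WithLp.toLp 2 (fun k => (z k : ℝ))

/-- ellipticity, symmetry, boundedness, measurability, 1-periodicity. -/
structure EllipticPeriodic {n m : ℕ} (lam Lam : ℝ)
    (A : Fin n → Fin n → Fin m → Fin m → Rn n → ℝ) : Prop where
  measurable : ∀ i j α β, Measurable (A i j α β)
  symm : ∀ i j α β, A i j α β = A j i β α
  elliptic : ∀ (y ξ : Rn n) (η : Rm m),
    lam * ‖ξ‖^2 * ‖η‖^2 ≤ ∑ i, ∑ j, ∑ α, ∑ β, A i j α β y * ξ i * ξ j * η α * η β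
  bounded : ∀ i j α β (y : Rn n), |A i j α β y| ≤ Lam
  periodic : ∀ i j α β (y : Rn n) (z : Fin n → ℤ), A i j α β (y + zlat z) = A i j α β y

/-- the partial derivative `D_i u^β (x)`. -/
def Dcoord {n m : ℕ} (u : Rn n → Rm m) (x : Rn n) (i : Fin n) (β : Fin m) : ℝ :=
  fderiv ℝ u x (EuclideanSpace.single i 1) β

/-- weak solution of `L_ε u = D_i f_i` in `U`. -/
def IsWeakSolDiv {n m : ℕ} (A : Fin n → Fin n → Fin m → Fin m → Rn n → ℝ) (ε : ℝ)
    (U : Set (Rn n)) (u : Rn n → Rm m) (f : Rn n → EuclideanSpace ℝ (Fin n × Fin m)) : Prop :=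
  ContDiffOn ℝ 1 u U ∧
  MeasureTheory.IntegrableOn (fun x => ‖fderiv ℝ u x‖^2) U ∧
  ∀ φ : Rn n → Rm m, ContDiff ℝ (⊤ : ℕ∞) φ → HasCompactSupport φ → tsupport φ ⊆ U →
    ∫ x in U, ∑ i, ∑ j, ∑ α, ∑ β,
        A i j α β (ε⁻¹ • x) * Dcoord u x j β * Dcoord φ x i α
      = - ∫ x in U, ∑ i, ∑ α, f x (i, α) * Dcoord φ x i α

/-- the `L²`-average `(⨍_D |u|²)^{1/2}`. -/
def L2avg {n m : ℕ} (u : Rn n → Rm m) (D : Set (Rn n)) : ℝ :=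
  Real.sqrt (⨍ x in D, ‖u x‖^2)

/-- modulus of continuity of `f` on `D`. -/
def rho {E F : Type*} [PseudoMetricSpace E] [NormedAddCommGroup F]
    (f : E → F) (D : Set E) (r : ℝ) : ℝ :=
  ⨆ q ∈ {q : E × E | q.1 ∈ D ∧ q.2 ∈ D ∧ dist q.1 q.2 ≤ r}, ‖f q.1 - f q.2‖

def matNorm {a b : ℕ} (M : Fin a → Fin b → ℝ) : ℝ :=
  Real.sqrt (∑ j, ∑ β, (M j β)^2)

def unitCube (n : ℕ) : Set (Rn n) := {y | ∀ k, y k ∈ Set.Ico (0:ℝ) 1}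

/-- corrector matrix for `A`. -/
def IsCorrector {n m : ℕ} (A : Fin n → Fin n → Fin m → Fin m → Rn n → ℝ)
    (χ : Fin n → Fin m → Rn n → Rm m) : Prop :=
  (∀ j β, ContDiff ℝ 1 (χ j β)) ∧
  (∀ j β (y : Rn n) (z : Fin n → ℤ), χ j β (y + zlat z) = χ j β y) ∧
  (∀ j β, ∫ y in unitCube n, χ j β y = 0) ∧
  ∀ φ : Rn n → Rm m, ContDiff ℝ (⊤ : ℕ∞) φ → (∀ (y : Rn n) (z : Fin n → ℤ), φ (y + zlat z) = φ y) →
    ∀ j β, ∫ y in unitCube n, ∑ i, ∑ k, ∑ α, ∑ γ,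
      A i k α γ y * (Dcoord (χ j β) y k γ + (if k = j ∧ γ = β then 1 else 0))
        * Dcoord φ y i α = 0

/-- projection onto the first `d+1` coordinates. -/
def proj' {d : ℕ} (x : Rn (d+2)) : Rn (d+1) := WithLp.toLp 2 (fun k : Fin (d+1) => x k.castSucc)

/-- the graph subdomain `Ω_ψ(0,r)`. -/
def graphDom {d : ℕ} (ψ : Rn (d+1) → ℝ) (r : ℝ) : Set (Rn (d+2)) :=
  {x | x ∈ Metric.ball (0 : Rn (d+2)) r ∧ ψ (proj' x) < x (Fin.last (d+1))}

/-- the graph boundary portion `Δ_ψ(0,r)`. -/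
def graphBdry {d : ℕ} (ψ : Rn (d+1) → ℝ) (r : ℝ) : Set (Rn (d+2)) :=
  {x | x ∈ Metric.ball (0 : Rn (d+2)) r ∧ ψ (proj' x) = x (Fin.last (d+1))}

/-- A bounded `C¹` domain in `ℝ^{d+2}`. -/
def IsC1Domain {d : ℕ} (Ω : Set (Rn (d+2))) : Prop :=
  IsOpen Ω ∧ Bornology.IsBounded Ω ∧
  ∃ R₀ > (0:ℝ), ∀ x₀ ∈ frontier Ω, ∃ (T : Rn (d+2) ≃ᵢ Rn (d+2)) (ψ : Rn (d+1) → ℝ),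
    T x₀ = 0 ∧ ψ 0 = 0 ∧ ContDiff ℝ 1 ψ ∧
    T '' (Ω ∩ Metric.ball x₀ R₀) = graphDom ψ R₀

/-- A bounded `C^{1,Dini}` domain in `ℝ^{d+2}`. -/
def IsC1DiniDomain {d : ℕ} (Ω : Set (Rn (d+2))) : Prop :=
  IsOpen Ω ∧ Bornology.IsBounded Ω ∧
  ∃ R₀ > (0:ℝ), ∃ σ : ℝ → ℝ, (∀ t, 0 ≤ σ t) ∧ MonotoneOn σ (Set.Ioc (0:ℝ) 1) ∧
    MeasureTheory.IntegrableOn (fun t => σ t / t) (Set.Ioo (0:ℝ) 1) ∧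
    ∀ x₀ ∈ frontier Ω, ∃ (T : Rn (d+2) ≃ᵢ Rn (d+2)) (ψ : Rn (d+1) → ℝ),
      T x₀ = 0 ∧ ψ 0 = 0 ∧ ContDiff ℝ 1 ψ ∧
      (∀ a b : Rn (d+1), 0 < dist a b → dist a b ≤ 1 →
        ‖fderiv ℝ ψ a - fderiv ℝ ψ b‖ ≤ σ (dist a b)) ∧
      T '' (Ω ∩ Metric.ball x₀ R₀) = graphDom ψ R₀

/-- Dirichlet corrector for `L_ε` on `D`. -/
def IsDirichletCorrector {n m : ℕ} (A : Fin n → Fin n → Fin m → Fin m → Rn n → ℝ) (ε : ℝ)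
    (D : Set (Rn n)) (Φ : Fin n → Fin m → Rn n → Rm m) : Prop :=
  ∀ j β, ContinuousOn (Φ j β) (closure D) ∧ ContDiffOn ℝ 1 (Φ j β) D ∧
    MeasureTheory.IntegrableOn (fun x => ‖fderiv ℝ (Φ j β) x‖^2) D ∧
    (∀ x ∈ frontier D, Φ j β x = (x j) • EuclideanSpace.single β (1:ℝ)) ∧
    ∀ φ : Rn n → Rm m, ContDiff ℝ (⊤ : ℕ∞) φ → HasCompactSupport φ → tsupport φ ⊆ D →
      ∫ x in D, ∑ i, ∑ k, ∑ α, ∑ γ,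
        A i k α γ (ε⁻¹ • x) * Dcoord (Φ j β) x k γ * Dcoord φ x i α = 0

/-- weak solution of the homogeneous system `L_ε u = 0` in `U`. -/
def IsWeakSol0 {n m : ℕ} (A : Fin n → Fin n → Fin m → Fin m → Rn n → ℝ) (ε : ℝ)
    (U : Set (Rn n)) (u : Rn n → Rm m) : Prop :=
  ContDiffOn ℝ 1 u U ∧
  MeasureTheory.IntegrableOn (fun x => ‖fderiv ℝ u x‖^2) U ∧
  ∀ φ : Rn n → Rm m, ContDiff ℝ (⊤ : ℕ∞) φ → HasCompactSupport φ → tsupport φ ⊆ U →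
    ∫ x in U, ∑ i, ∑ j, ∑ α, ∑ β,
      A i j α β (ε⁻¹ • x) * Dcoord u x j β * Dcoord φ x i α = 0

/-- the unit outward normal to the graph of `ψ` at `0`. -/
def outNormal {d : ℕ} (ψ : Rn (d+1) → ℝ) : Rn (d+2) :=
  (Real.sqrt (1 + ‖fderiv ℝ ψ 0‖^2))⁻¹ •
    (WithLp.toLp 2 (fun i : Fin (d+2) => (Fin.lastCases (-1) (fun k => fderiv ℝ ψ 0 (EuclideanSpace.single k 1)) i : ℝ)) : Rn (d+2))


/-- the decreasing majorant `ω̃(t) = t^β · sup_{t ≤ s ≤ 1} ω(s) s^{-β}`. -/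
def omTilde (β : ℝ) (ω : ℝ → ℝ) (t : ℝ) : ℝ :=
  t ^ β * ⨆ s ∈ Set.Icc t 1, ω s * s ^ (-β)

section DiniAux

variable {β : ℝ} {ω : ℝ → ℝ}

lemma sup_le_aux (hβ0 : 0 < β) (hω : Monotone ω) (hω0 : ∀ t, 0 ≤ ω t)
    {t : ℝ} (ht : 0 < t) :
    (⨆ s ∈ Set.Icc t 1, ω s * s ^ (-β)) ≤ ω 1 * t ^ (-β) := by
  have hB : 0 ≤ ω 1 * t ^ (-β) := mul_nonneg (hω0 1) (Real.rpow_nonneg ht.le _)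
  refine Real.iSup_le (fun s => Real.iSup_le (fun hs => ?_) hB) hB
  have h1 : ω s ≤ ω 1 := hω hs.2
  have h2 : s ^ (-β) ≤ t ^ (-β) :=
    Real.rpow_le_rpow_of_nonpos ht hs.1 (neg_nonpos.2 hβ0.le)
  exact mul_le_mul h1 h2 (Real.rpow_nonneg (ht.trans_le hs.1).le _) (hω0 1)

lemma bddAbove_aux (hβ0 : 0 < β) (hω : Monotone ω) (hω0 : ∀ t, 0 ≤ ω t)
    {t : ℝ} (ht : 0 < t) :
    BddAbove (Set.range fun s => ⨆ _ : s ∈ Set.Icc t 1, ω s * s ^ (-β)) := by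
  refine ⟨ω 1 * t ^ (-β), fun x ⟨s, hs⟩ => ?_⟩
  subst hs
  have hB : 0 ≤ ω 1 * t ^ (-β) := mul_nonneg (hω0 1) (Real.rpow_nonneg ht.le _)
  refine Real.iSup_le (fun hs => ?_) hB
  exact mul_le_mul (hω hs.2) (Real.rpow_le_rpow_of_nonpos ht hs.1 (neg_nonpos.2 hβ0.le))
    (Real.rpow_nonneg (ht.trans_le hs.1).le _) (hω0 1)

lemma le_sup_aux (hβ0 : 0 < β) (hω : Monotone ω) (hω0 : ∀ t, 0 ≤ ω t)
    {t s : ℝ} (ht : 0 < t) (hs : s ∈ Set.Icc t 1) :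
    ω s * s ^ (-β) ≤ ⨆ s ∈ Set.Icc t 1, ω s * s ^ (-β) := by
  have := le_ciSup (bddAbove_aux hβ0 hω hω0 ht) s
  rwa [ciSup_pos hs] at this

lemma part1 (hβ0 : 0 < β) (hω : Monotone ω) (hω0 : ∀ t, 0 ≤ ω t)
    {t : ℝ} (ht : t ∈ Set.Ioc (0:ℝ) 1) : ω t ≤ omTilde β ω t := by
  have h := le_sup_aux hβ0 hω hω0 ht.1 ⟨le_refl t, ht.2⟩
  have htβ : (0:ℝ) < t ^ β := Real.rpow_pos_of_pos ht.1 _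
  have : ω t = t ^ β * (ω t * t ^ (-β)) := by
    rw [mul_comm (ω t), ← mul_assoc, ← Real.rpow_add ht.1]
    simp
  rw [this, omTilde]
  exact mul_le_mul_of_nonneg_left h htβ.le

lemma sup_antitone (hβ0 : 0 < β) (hω : Monotone ω) (hω0 : ∀ t, 0 ≤ ω t) :
    AntitoneOn (fun t => ⨆ s ∈ Set.Icc t 1, ω s * s ^ (-β)) (Set.Ioc (0:ℝ) 1) := by
  intro t1 ht1 t2 ht2 h12
  have hB : 0 ≤ ⨆ s ∈ Set.Icc t1 1, ω s * s ^ (-β) := by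
    refine le_trans ?_ (le_sup_aux hβ0 hω hω0 ht1.1 ⟨ht1.2, le_refl 1⟩)
    exact mul_nonneg (hω0 1) (Real.rpow_nonneg zero_le_one _)
  refine Real.iSup_le (fun s => Real.iSup_le (fun hs => ?_) hB) hB
  exact le_sup_aux hβ0 hω hω0 ht1.1 ⟨h12.trans hs.1, hs.2⟩

lemma part2 (hβ0 : 0 < β) (hω : Monotone ω) (hω0 : ∀ t, 0 ≤ ω t) :
    AntitoneOn (fun t => omTilde β ω t / t ^ β) (Set.Ioc (0:ℝ) 1) := by
  have key : ∀ t ∈ Set.Ioc (0:ℝ) 1,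
      omTilde β ω t / t ^ β = ⨆ s ∈ Set.Icc t 1, ω s * s ^ (-β) := by
    intro t ht
    rw [omTilde, mul_comm, mul_div_assoc,
      div_self (ne_of_gt (Real.rpow_pos_of_pos ht.1 _)), mul_one]
  intro t1 ht1 t2 ht2 h12
  show omTilde β ω t2 / t2 ^ β ≤ omTilde β ω t1 / t1 ^ β
  rw [key t1 ht1, key t2 ht2]
  exact sup_antitone hβ0 hω hω0 ht1 ht2 h12

lemma integrand_integrable (hβ0 : 0 < β) (hω : Monotone ω) (hω0 : ∀ t, 0 ≤ ω t)
    {t : ℝ} (ht : 0 < t) :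
    IntegrableOn (fun r => ω r * r ^ (-β - 1)) (Set.Ioc t 1) := by
  have hmeas : Measurable (fun r => ω r * r ^ (-β - 1)) :=
    hω.measurable.mul (measurable_id.pow_const _)
  refine Measure.integrableOn_of_bounded (M := ω 1 * t ^ (-β - 1)) ?_ hmeas.aestronglyMeasurable ?_
  · exact ((measure_mono Set.Ioc_subset_Icc_self).trans_lt (by simp [measure_Icc_lt_top])).ne
  · filter_upwards [ae_restrict_mem measurableSet_Ioc] with r hr
    have hr0 : 0 < r := ht.trans hr.1
    rw [Real.norm_eq_abs, abs_of_nonneg (mul_nonneg (hω0 r) (Real.rpow_nonneg hr0.le _))]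
    exact mul_le_mul (hω hr.2) (Real.rpow_le_rpow_of_nonpos ht hr.1.le (by linarith))
      (Real.rpow_nonneg hr0.le _) (hω0 1)

lemma integrand_nonneg (hω0 : ∀ t, 0 ≤ ω t) {t : ℝ} (ht : 0 < t) :
    ∀ r ∈ Set.Ioc t 1, 0 ≤ ω r * r ^ (-β - 1) := fun r hr =>
  mul_nonneg (hω0 r) (Real.rpow_nonneg (ht.trans hr.1).le _)

/-- the doubling estimate: for `t ≤ s ≤ 1/2`,
`ω s * s^{-β} * log 2 ≤ 2^β * ∫_{Ioc t 1} ω r r^{-β-1}`. -/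

lemma doubling (hβ0 : 0 < β) (hω : Monotone ω) (hω0 : ∀ t, 0 ≤ ω t)
    {t s : ℝ} (ht : 0 < t) (hts : t ≤ s) (hs2 : s ≤ 1/2) :
    ω s * s ^ (-β) * Real.log 2 ≤ 2 ^ β * ∫ r in Set.Ioc t 1, ω r * r ^ (-β - 1) := by
  have hs0 : 0 < s := ht.trans_le hts
  have hsub : Set.Ioc s (2*s) ⊆ Set.Ioc t 1 := fun r hr =>
    ⟨hts.trans_lt hr.1, hr.2.trans (by linarith)⟩
  -- step 1 : pointwise bound on Ioc s (2s)
  have hpt : ∀ r ∈ Set.Ioc s (2*s),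
      ω s * s ^ (-β) * 2 ^ (-β) * r⁻¹ ≤ ω r * r ^ (-β - 1) := by
    intro r hr
    have hr0 : 0 < r := hs0.trans hr.1
    have h1 : ω s ≤ ω r := hω hr.1.le
    have h2 : s ^ (-β) * 2 ^ (-β) ≤ r ^ (-β) := by
      rw [← Real.mul_rpow hs0.le (by norm_num), mul_comm s 2]
      exact Real.rpow_le_rpow_of_nonpos hr0 hr.2 (neg_nonpos.2 hβ0.le)
    have h3 : r ^ (-β - 1) = r ^ (-β) * r⁻¹ := by
      rw [Real.rpow_sub hr0, Real.rpow_one, div_eq_mul_inv]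
    calc ω s * s ^ (-β) * 2 ^ (-β) * r⁻¹ = ω s * (s ^ (-β) * 2 ^ (-β)) * r⁻¹ := by ring
      _ ≤ ω r * r ^ (-β) * r⁻¹ := by
          refine mul_le_mul_of_nonneg_right ?_ (inv_nonneg.2 hr0.le)
          exact mul_le_mul h1 h2 (by positivity) (hω0 r)
      _ = ω r * r ^ (-β - 1) := by rw [h3]; ring
  -- step 2 : ∫_{Ioc s 2s} r⁻¹ = log 2
  have hinv : ∫ r in Set.Ioc s (2*s), r⁻¹ = Real.log 2 := by
    rw [← intervalIntegral.integral_of_le (by linarith), integral_inv_of_pos hs0 (by linarith)]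
    rw [mul_div_assoc, div_self hs0.ne', mul_one]
  -- step 3 : combine
  have hint1 : IntegrableOn (fun r => ω r * r ^ (-β - 1)) (Set.Ioc t 1) :=
    integrand_integrable hβ0 hω hω0 ht
  have hint2 : IntegrableOn (fun r => ω r * r ^ (-β - 1)) (Set.Ioc s (2*s)) :=
    hint1.mono_set hsub
  have step1 : ω s * s ^ (-β) * 2 ^ (-β) * Real.log 2
      ≤ ∫ r in Set.Ioc s (2*s), ω r * r ^ (-β - 1) := by
    have := setIntegral_mono_on (f := fun r => ω s * s ^ (-β) * 2 ^ (-β) * r⁻¹)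
      (g := fun r => ω r * r ^ (-β - 1)) ?_ hint2 measurableSet_Ioc hpt
    · rw [integral_const_mul, hinv] at this; exact this
    · refine Integrable.const_mul ?_ _
      show IntegrableOn (fun r : ℝ => r⁻¹) (Set.Ioc s (2*s)) volume
      rw [← intervalIntegrable_iff_integrableOn_Ioc_of_le (by linarith : s ≤ 2*s)]
      exact intervalIntegral.intervalIntegrable_inv (f := id)
        (fun x hx => by
          have h1 : s ⊓ (2*s) ≤ x := hx.1
          have hx0 : (0:ℝ) < x := lt_of_lt_of_le (lt_inf_iff.2 ⟨hs0, by linarith⟩) h1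
          exact hx0.ne')
        continuousOn_id
  have step2 : (∫ r in Set.Ioc s (2*s), ω r * r ^ (-β - 1))
      ≤ ∫ r in Set.Ioc t 1, ω r * r ^ (-β - 1) := by
    refine setIntegral_mono_set hint1 ?_ (HasSubset.Subset.eventuallyLE hsub)
    filter_upwards [ae_restrict_mem measurableSet_Ioc] with r hr
    exact integrand_nonneg hω0 ht r hr
  have h2β : (0:ℝ) < 2 ^ β := Real.rpow_pos_of_pos (by norm_num) _
  have key : 2 ^ (-β) * (2:ℝ) ^ β = 1 := by
    rw [← Real.rpow_add (by norm_num)]; simp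
  calc ω s * s ^ (-β) * Real.log 2
      = 2 ^ β * (ω s * s ^ (-β) * 2 ^ (-β) * Real.log 2) := by
        rw [show (2:ℝ) ^ β * (ω s * s ^ (-β) * 2 ^ (-β) * Real.log 2)
            = (2 ^ (-β) * 2 ^ β) * (ω s * s ^ (-β) * Real.log 2) from by ring, key, one_mul]
    _ ≤ 2 ^ β * ∫ r in Set.Ioc t 1, ω r * r ^ (-β - 1) :=
        mul_le_mul_of_nonneg_left (step1.trans step2) h2β.le

lemma J_nonneg (hω0 : ∀ t, 0 ≤ ω t) {t : ℝ} (ht : 0 < t) :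
    0 ≤ ∫ r in Set.Ioc t 1, ω r * r ^ (-β - 1) :=
  setIntegral_nonneg measurableSet_Ioc (integrand_nonneg hω0 ht)

lemma sup_le_J (hβ0 : 0 < β) (hω : Monotone ω) (hω0 : ∀ t, 0 ≤ ω t)
    {t : ℝ} (ht : t ∈ Set.Ioc (0:ℝ) 1) :
    (⨆ s ∈ Set.Icc t 1, ω s * s ^ (-β))
      ≤ 2 ^ β * ((Real.log 2)⁻¹ * (∫ r in Set.Ioc t 1, ω r * r ^ (-β - 1)) + ω 1) := by
  set J := ∫ r in Set.Ioc t 1, ω r * r ^ (-β - 1) with hJ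
  have hJ0 : 0 ≤ J := J_nonneg hω0 ht.1
  have hlog : 0 < Real.log 2 := Real.log_pos (by norm_num)
  have h2β : (0:ℝ) < 2 ^ β := Real.rpow_pos_of_pos (by norm_num) _
  have hB : 0 ≤ 2 ^ β * ((Real.log 2)⁻¹ * J + ω 1) :=
    mul_nonneg h2β.le (add_nonneg (mul_nonneg (inv_nonneg.2 hlog.le) hJ0) (hω0 1))
  refine Real.iSup_le (fun s => Real.iSup_le (fun hs => ?_) hB) hB
  rcases le_or_gt s (1/2) with hs2 | hs2
  · have := doubling hβ0 hω hω0 ht.1 hs.1 hs2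
    rw [← hJ] at this
    have h1 : ω s * s ^ (-β) ≤ 2 ^ β * ((Real.log 2)⁻¹ * J) := by
      calc ω s * s ^ (-β) ≤ 2 ^ β * J / Real.log 2 := (le_div_iff₀ hlog).2 this
        _ = 2 ^ β * ((Real.log 2)⁻¹ * J) := by ring
    nlinarith [mul_nonneg h2β.le (hω0 1)]
  · have hs0 : (0:ℝ) < s := lt_trans (by norm_num) hs2
    have h1 : ω s ≤ ω 1 := hω hs.2
    have h2 : s ^ (-β) ≤ (2:ℝ) ^ β := by
      have : s ^ (-β) ≤ ((1:ℝ)/2) ^ (-β) :=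
        Real.rpow_le_rpow_of_nonpos (by norm_num) hs2.le (neg_nonpos.2 hβ0.le)
      refine this.trans_eq ?_
      rw [one_div, Real.inv_rpow (by norm_num), Real.rpow_neg (by norm_num), inv_inv]
    have : ω s * s ^ (-β) ≤ ω 1 * 2 ^ β :=
      mul_le_mul h1 h2 (Real.rpow_nonneg hs0.le _) (hω0 1)
    nlinarith [mul_nonneg (mul_nonneg h2β.le (inv_nonneg.2 hlog.le)) hJ0]

lemma rpow_integral_Ioo (hβ0 : 0 < β) {r : ℝ} (hr : 0 < r) :
    ∫ t in Set.Ioo (0:ℝ) r, t ^ (β - 1) = r ^ β / β := by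
  rw [← integral_Ioc_eq_integral_Ioo, ← intervalIntegral.integral_of_le hr.le,
    integral_rpow (Or.inl (by linarith)), Real.zero_rpow (by linarith : β - 1 + 1 ≠ 0),
    sub_add_cancel, sub_zero]

lemma tonelli (hβ0 : 0 < β) (hβ1 : β < 1) (hω : Monotone ω) (hω0 : ∀ t, 0 ≤ ω t)
    (hint : IntegrableOn (fun t => ω t / t) (Set.Ioo 0 1)) :
    ∫⁻ t in Set.Ioo (0:ℝ) 1,
        ENNReal.ofReal (t ^ (β-1) * ∫ r in Set.Ioc t 1, ω r * r ^ (-β-1))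
      = ENNReal.ofReal β⁻¹ * ENNReal.ofReal (∫ r in Set.Ioo (0:ℝ) 1, ω r / r) := by
  set μ := volume.restrict (Set.Ioo (0:ℝ) 1) with hμ
  set f : ℝ → ℝ → ℝ≥0∞ := fun t r =>
    ENNReal.ofReal (t ^ (β-1) * (ω r * r ^ (-β-1))) * (Set.Ioi t).indicator 1 r with hf
  -- measurability
  have hmeas : Measurable (fun z : ℝ × ℝ => f z.1 z.2) := by
    have h1 : Measurable fun z : ℝ × ℝ =>
        ENNReal.ofReal (z.1 ^ (β-1) * (ω z.2 * z.2 ^ (-β-1))) :=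
      ((measurable_fst.pow_const _).mul
        ((hω.measurable.comp measurable_snd).mul (measurable_snd.pow_const _))).ennreal_ofReal
    have h2 : (fun z : ℝ × ℝ => (Set.Ioi z.1).indicator (1 : ℝ → ℝ≥0∞) z.2)
        = fun z : ℝ × ℝ => ({p : ℝ × ℝ | p.1 < p.2}).indicator 1 z := by
      funext z
      by_cases h : z.1 < z.2 <;> simp [Set.indicator, h]
    refine h1.mul ?_
    rw [h2]
    exact measurable_const.indicator (measurableSet_lt measurable_fst measurable_snd)
  have hIooIoi : ∀ {t : ℝ}, t ∈ Set.Ioo (0:ℝ) 1 → Set.Ioi t ∩ Set.Ioo 0 1 = Set.Ioo t 1 := by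
    intro t ht; ext r
    simp only [Set.mem_inter_iff, Set.mem_Ioi, Set.mem_Ioo]
    constructor
    · rintro ⟨h1, h2, h3⟩; exact ⟨h1, h3⟩
    · rintro ⟨h1, h2⟩; exact ⟨h1, ht.1.trans h1, h2⟩
  have stepB : ∀ t ∈ Set.Ioo (0:ℝ) 1,
      (∫⁻ r, f t r ∂μ)
        = ENNReal.ofReal (t ^ (β-1) * ∫ r in Set.Ioc t 1, ω r * r ^ (-β-1)) := by
    intro t ht
    have hC : (0:ℝ) ≤ t ^ (β-1) := Real.rpow_nonneg ht.1.le _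
    have e1 : ∀ r, f t r
        = (Set.Ioi t).indicator (fun r => ENNReal.ofReal (t ^ (β-1) * (ω r * r ^ (-β-1)))) r := by
      intro r; by_cases h : r ∈ Set.Ioi t
      · simp only [hf, Set.indicator_of_mem h, mul_one, Pi.one_apply]
      · simp only [hf, Set.indicator_of_notMem h, mul_zero]
    rw [lintegral_congr e1, lintegral_indicator measurableSet_Ioi, hμ,
      Measure.restrict_restrict measurableSet_Ioi, hIooIoi ht]
    have hint2 : IntegrableOn (fun r => ω r * r ^ (-β-1)) (Set.Ioo t 1) :=
      (integrand_integrable hβ0 hω hω0 ht.1).mono_set Set.Ioo_subset_Ioc_self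
    have hnn : 0 ≤ᵐ[volume.restrict (Set.Ioo t 1)] fun r => ω r * r ^ (-β-1) := by
      filter_upwards [ae_restrict_mem measurableSet_Ioo] with r hr
      exact mul_nonneg (hω0 r) (Real.rpow_nonneg (ht.1.trans hr.1).le _)
    have e2 : ENNReal.ofReal (∫ r in Set.Ioo t 1, ω r * r ^ (-β-1))
        = ∫⁻ r in Set.Ioo t 1, ENNReal.ofReal (ω r * r ^ (-β-1)) :=
      ofReal_integral_eq_lintegral_ofReal hint2 hnn
    calc ∫⁻ r in Set.Ioo t 1, ENNReal.ofReal (t ^ (β-1) * (ω r * r ^ (-β-1)))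
        = ∫⁻ r in Set.Ioo t 1,
            ENNReal.ofReal (t ^ (β-1)) * ENNReal.ofReal (ω r * r ^ (-β-1)) := by
          congr 1; funext r; rw [ENNReal.ofReal_mul hC]
      _ = ENNReal.ofReal (t ^ (β-1)) * ∫⁻ r in Set.Ioo t 1,
            ENNReal.ofReal (ω r * r ^ (-β-1)) :=
          lintegral_const_mul' _ _ ENNReal.ofReal_ne_top
      _ = ENNReal.ofReal (t ^ (β-1) * ∫ r in Set.Ioc t 1, ω r * r ^ (-β-1)) := by
          rw [integral_Ioc_eq_integral_Ioo, ENNReal.ofReal_mul hC, e2]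
  have hIioIoo : ∀ {r : ℝ}, r ∈ Set.Ioo (0:ℝ) 1 → Set.Iio r ∩ Set.Ioo 0 1 = Set.Ioo 0 r := by
    intro r hr; ext t
    simp only [Set.mem_inter_iff, Set.mem_Iio, Set.mem_Ioo]
    constructor
    · rintro ⟨h1, h2, h3⟩; exact ⟨h2, h1⟩
    · rintro ⟨h1, h2⟩; exact ⟨h2, h1, h2.trans hr.2⟩
  have stepC : ∀ r ∈ Set.Ioo (0:ℝ) 1,
      (∫⁻ t, f t r ∂μ) = ENNReal.ofReal β⁻¹ * ENNReal.ofReal (ω r / r) := by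
    intro r hr
    have hw : (0:ℝ) ≤ ω r * r ^ (-β-1) := mul_nonneg (hω0 r) (Real.rpow_nonneg hr.1.le _)
    have e1 : ∀ t ∈ Set.Ioo (0:ℝ) 1, f t r = (Set.Iio r).indicator
        (fun t => ENNReal.ofReal (ω r * r ^ (-β-1)) * ENNReal.ofReal (t ^ (β-1))) t := by
      intro t ht
      by_cases h : t < r
      · rw [Set.indicator_of_mem (Set.mem_Iio.2 h), hf]
        simp only [Set.indicator_of_mem (Set.mem_Ioi.2 h), Pi.one_apply, mul_one]
        rw [← ENNReal.ofReal_mul hw, mul_comm (ω r * r ^ (-β-1))]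
      · rw [Set.indicator_of_notMem (by simpa using h : t ∉ Set.Iio r), hf]
        simp only [Set.indicator_of_notMem (by simpa using h : r ∉ Set.Ioi t), mul_zero]
    have hint3 : IntegrableOn (fun t : ℝ => t ^ (β-1)) (Set.Ioo 0 r) :=
      (intervalIntegral.integrableOn_Ioo_rpow_iff hr.1).2 (by linarith)
    have hnn3 : 0 ≤ᵐ[volume.restrict (Set.Ioo (0:ℝ) r)] fun t : ℝ => t ^ (β-1) := by
      filter_upwards [ae_restrict_mem measurableSet_Ioo] with t ht
      exact Real.rpow_nonneg ht.1.le _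
    calc ∫⁻ t, f t r ∂μ
        = ∫⁻ t, (Set.Iio r).indicator
            (fun t => ENNReal.ofReal (ω r * r ^ (-β-1)) * ENNReal.ofReal (t ^ (β-1))) t ∂μ :=
          lintegral_congr_ae (by
            filter_upwards [ae_restrict_mem measurableSet_Ioo] with t ht using e1 t ht)
      _ = ∫⁻ t in Set.Ioo 0 r,
            ENNReal.ofReal (ω r * r ^ (-β-1)) * ENNReal.ofReal (t ^ (β-1)) := by
          rw [lintegral_indicator measurableSet_Iio, hμ,
            Measure.restrict_restrict measurableSet_Iio, hIioIoo hr]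
      _ = ENNReal.ofReal (ω r * r ^ (-β-1)) * ∫⁻ t in Set.Ioo (0:ℝ) r,
            ENNReal.ofReal (t ^ (β-1)) :=
          lintegral_const_mul' _ _ ENNReal.ofReal_ne_top
      _ = ENNReal.ofReal (ω r * r ^ (-β-1)) * ENNReal.ofReal (r ^ β / β) := by
          rw [← ofReal_integral_eq_lintegral_ofReal hint3 hnn3, rpow_integral_Ioo hβ0 hr.1]
      _ = ENNReal.ofReal β⁻¹ * ENNReal.ofReal (ω r / r) := by
          rw [← ENNReal.ofReal_mul hw, ← ENNReal.ofReal_mul (by positivity : (0:ℝ) ≤ β⁻¹)]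
          congr 1
          have hr1 : r ^ (-β-1) * r ^ β = r⁻¹ := by
            rw [← Real.rpow_add hr.1, show -β-1+β = -1 by ring, Real.rpow_neg_one]
          calc ω r * r ^ (-β-1) * (r ^ β / β) = (r ^ (-β-1) * r ^ β) * ω r / β := by ring
            _ = β⁻¹ * (ω r / r) := by rw [hr1]; ring
  -- assembly
  have hnn4 : 0 ≤ᵐ[μ] fun r => ω r / r := by
    filter_upwards [ae_restrict_mem measurableSet_Ioo] with r hr
    exact div_nonneg (hω0 r) hr.1.le
  calc ∫⁻ t, ENNReal.ofReal (t ^ (β-1) * ∫ r in Set.Ioc t 1, ω r * r ^ (-β-1)) ∂μ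
      = ∫⁻ t, ∫⁻ r, f t r ∂μ ∂μ :=
        (lintegral_congr_ae (by
          filter_upwards [ae_restrict_mem measurableSet_Ioo] with t ht using
            (stepB t ht).symm))
    _ = ∫⁻ r, ∫⁻ t, f t r ∂μ ∂μ := lintegral_lintegral_swap hmeas.aemeasurable
    _ = ∫⁻ r, ENNReal.ofReal β⁻¹ * ENNReal.ofReal (ω r / r) ∂μ :=
        lintegral_congr_ae (by
          filter_upwards [ae_restrict_mem measurableSet_Ioo] with r hr using stepC r hr)
    _ = ENNReal.ofReal β⁻¹ * ∫⁻ r, ENNReal.ofReal (ω r / r) ∂μ :=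
        lintegral_const_mul' _ _ ENNReal.ofReal_ne_top
    _ = ENNReal.ofReal β⁻¹ * ENNReal.ofReal (∫ r in Set.Ioo (0:ℝ) 1, ω r / r) := by
        rw [ofReal_integral_eq_lintegral_ofReal hint hnn4]

lemma part3 (hβ0 : 0 < β) (hβ1 : β < 1) (hω : Monotone ω) (hω0 : ∀ t, 0 ≤ ω t)
    (hint : IntegrableOn (fun t => ω t / t) (Set.Ioo 0 1)) :
    IntegrableOn (fun t => omTilde β ω t / t) (Set.Ioo 0 1) ∧
    (∫ t in Set.Ioo (0:ℝ) 1, omTilde β ω t / t)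
      ≤ (2 ^ β * β⁻¹ * ((Real.log 2)⁻¹ + 1)) * ((∫ t in Set.Ioo (0:ℝ) 1, ω t / t) + ω 1) := by
  have hlog : (0:ℝ) < Real.log 2 := Real.log_pos (by norm_num)
  have h2β : (0:ℝ) < 2 ^ β := Real.rpow_pos_of_pos (by norm_num) _
  set J : ℝ → ℝ := fun t => ∫ r in Set.Ioc t 1, ω r * r ^ (-β-1) with hJdef
  set g : ℝ → ℝ := fun t =>
    2 ^ β * (Real.log 2)⁻¹ * (t ^ (β-1) * J t) + 2 ^ β * ω 1 * t ^ (β-1) with hgdef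
  -- J antitone on Ioo 0 1
  have hJanti : AntitoneOn J (Set.Ioo (0:ℝ) 1) := by
    intro t1 ht1 t2 ht2 h12
    refine setIntegral_mono_set (integrand_integrable hβ0 hω hω0 ht1.1) ?_ ?_
    · filter_upwards [ae_restrict_mem measurableSet_Ioc] with r hr using
        integrand_nonneg hω0 ht1.1 r hr
    · exact HasSubset.Subset.eventuallyLE (Set.Ioc_subset_Ioc_left h12)
  -- integrability of t^{β-1} * J t
  have hJmeas : AEMeasurable J (volume.restrict (Set.Ioo (0:ℝ) 1)) :=
    aemeasurable_restrict_of_antitoneOn measurableSet_Ioo hJanti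
  have hgJmeas : AEMeasurable (fun t => t ^ (β-1) * J t)
      (volume.restrict (Set.Ioo (0:ℝ) 1)) :=
    (measurable_id.pow_const _).aemeasurable.mul hJmeas
  have hgJnn : 0 ≤ᵐ[volume.restrict (Set.Ioo (0:ℝ) 1)] fun t => t ^ (β-1) * J t := by
    filter_upwards [ae_restrict_mem measurableSet_Ioo] with t ht
    exact mul_nonneg (Real.rpow_nonneg ht.1.le _) (J_nonneg hω0 ht.1)
  have hωint_nn : (0:ℝ) ≤ ∫ t in Set.Ioo (0:ℝ) 1, ω t / t := by
    refine setIntegral_nonneg measurableSet_Ioo fun t ht => div_nonneg (hω0 t) ht.1.le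
  have hgJint : IntegrableOn (fun t => t ^ (β-1) * J t) (Set.Ioo (0:ℝ) 1) := by
    refine ⟨hgJmeas.aestronglyMeasurable, ?_⟩
    rw [hasFiniteIntegral_iff_ofReal hgJnn, tonelli hβ0 hβ1 hω hω0 hint]
    exact ENNReal.mul_lt_top ENNReal.ofReal_lt_top ENNReal.ofReal_lt_top
  have hgJval : ∫ t in Set.Ioo (0:ℝ) 1, t ^ (β-1) * J t
      = β⁻¹ * ∫ t in Set.Ioo (0:ℝ) 1, ω t / t := by
    have h1 := ofReal_integral_eq_lintegral_ofReal hgJint hgJnn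
    rw [tonelli hβ0 hβ1 hω hω0 hint,
      ← ENNReal.ofReal_mul (by positivity : (0:ℝ) ≤ β⁻¹)] at h1
    refine (ENNReal.ofReal_eq_ofReal_iff ?_ ?_).1 h1
    · exact setIntegral_nonneg_of_ae_restrict hgJnn
    · positivity
  -- integrability of t^{β-1}
  have hpow_int : IntegrableOn (fun t : ℝ => t ^ (β-1)) (Set.Ioo (0:ℝ) 1) :=
    (intervalIntegral.integrableOn_Ioo_rpow_iff one_pos).2 (by linarith)
  have hpow_val : ∫ t in Set.Ioo (0:ℝ) 1, t ^ (β-1) = β⁻¹ := by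
    rw [rpow_integral_Ioo hβ0 one_pos, Real.one_rpow, one_div]
  -- g integrable and its integral
  have hgint : IntegrableOn g (Set.Ioo (0:ℝ) 1) :=
    (hgJint.const_mul _).add (hpow_int.const_mul _)
  have hgval : ∫ t in Set.Ioo (0:ℝ) 1, g t
      = 2 ^ β * (Real.log 2)⁻¹ * (β⁻¹ * ∫ t in Set.Ioo (0:ℝ) 1, ω t / t)
        + 2 ^ β * ω 1 * β⁻¹ := by
    rw [hgdef]
    rw [integral_add (hgJint.const_mul _) (hpow_int.const_mul _),
      integral_const_mul, integral_const_mul, hgJval, hpow_val]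
  -- pointwise bound
  have hpt : ∀ t ∈ Set.Ioo (0:ℝ) 1, 0 ≤ omTilde β ω t / t ∧ omTilde β ω t / t ≤ g t := by
    intro t ht
    have ht0 : (0:ℝ) < t := ht.1
    set M := ⨆ s ∈ Set.Icc t 1, ω s * s ^ (-β) with hM
    have hM0 : 0 ≤ M := by
      refine le_trans ?_ (le_sup_aux hβ0 hω hω0 ht0 ⟨ht.2.le, le_refl 1⟩)
      exact mul_nonneg (hω0 1) (Real.rpow_nonneg zero_le_one _)
    have key : omTilde β ω t / t = t ^ (β-1) * M := by
      rw [omTilde, ← hM, mul_comm (t ^ β) M, mul_div_assoc, mul_comm M]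
      congr 1
      rw [Real.rpow_sub ht0, Real.rpow_one]
    constructor
    · rw [key]; exact mul_nonneg (Real.rpow_nonneg ht0.le _) hM0
    · rw [key, hgdef]
      have := sup_le_J hβ0 hω hω0 (⟨ht0, ht.2.le⟩ : t ∈ Set.Ioc (0:ℝ) 1)
      rw [← hM] at this
      have h2 := mul_le_mul_of_nonneg_left this (Real.rpow_nonneg ht0.le (β-1))
      calc t ^ (β-1) * M
          ≤ t ^ (β-1) * (2 ^ β * ((Real.log 2)⁻¹ * J t + ω 1)) := h2
        _ = 2 ^ β * (Real.log 2)⁻¹ * (t ^ (β-1) * J t) + 2 ^ β * ω 1 * t ^ (β-1) := by ring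
  -- integrability of omTilde/t
  have hMae : AEMeasurable (fun t => ⨆ s ∈ Set.Icc t 1, ω s * s ^ (-β))
      (volume.restrict (Set.Ioo (0:ℝ) 1)) :=
    aemeasurable_restrict_of_antitoneOn measurableSet_Ioo
      ((sup_antitone hβ0 hω hω0).mono Set.Ioo_subset_Ioc_self)
  have hhmeas : AEStronglyMeasurable (fun t => omTilde β ω t / t)
      (volume.restrict (Set.Ioo (0:ℝ) 1)) := by
    refine AEMeasurable.aestronglyMeasurable ?_
    exact (((measurable_id.pow_const β).aemeasurable.mul hMae).div
      measurable_id.aemeasurable)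
  have hhint : IntegrableOn (fun t => omTilde β ω t / t) (Set.Ioo (0:ℝ) 1) := by
    refine Integrable.mono' hgint hhmeas ?_
    filter_upwards [ae_restrict_mem measurableSet_Ioo] with t ht
    rw [Real.norm_eq_abs, abs_of_nonneg (hpt t ht).1]
    exact (hpt t ht).2
  refine ⟨hhint, ?_⟩
  have hle : (∫ t in Set.Ioo (0:ℝ) 1, omTilde β ω t / t) ≤ ∫ t in Set.Ioo (0:ℝ) 1, g t := by
    refine integral_mono_ae hhint hgint ?_
    filter_upwards [ae_restrict_mem measurableSet_Ioo] with t ht using (hpt t ht).2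
  rw [hgval] at hle
  refine hle.trans ?_
  set A := ∫ t in Set.Ioo (0:ℝ) 1, ω t / t
  have hβinv : (0:ℝ) < β⁻¹ := by positivity
  have hloginv : (0:ℝ) < (Real.log 2)⁻¹ := by positivity
  nlinarith [mul_nonneg (mul_nonneg h2β.le hβinv.le) hωint_nn,
    mul_nonneg (mul_nonneg h2β.le hβinv.le) (hω0 1),
    mul_nonneg (mul_nonneg (mul_nonneg h2β.le hβinv.le) hloginv.le) (hω0 1)]

end DiniAux

/-- **The reduction (2.4): a quasi-decreasing majorant preserving the Dini condition.** -/
theorem decreasing_majorant_dini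
    (β : ℝ) (hβ : β ∈ Set.Ioo (0:ℝ) 1) :
    ∃ C > (0:ℝ), ∀ ω : ℝ → ℝ,
      (∀ t ∈ Set.Ioc (0:ℝ) 1, 0 ≤ ω t) →
      MonotoneOn ω (Set.Ioc (0:ℝ) 1) →
      MeasureTheory.IntegrableOn (fun t => ω t / t) (Set.Ioo (0:ℝ) 1) →
      (∀ t ∈ Set.Ioc (0:ℝ) 1, ω t ≤ omTilde β ω t) ∧
      AntitoneOn (fun t => omTilde β ω t / t ^ β) (Set.Ioc (0:ℝ) 1) ∧
      (∫ t in Set.Ioo (0:ℝ) 1, omTilde β ω t / t)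
        ≤ C * ((∫ t in Set.Ioo (0:ℝ) 1, ω t / t) + ω 1) ∧
      MeasureTheory.IntegrableOn (fun t => omTilde β ω t / t) (Set.Ioo (0:ℝ) 1) := by
  obtain ⟨hβ0, hβ1⟩ := hβ
  refine ⟨2 ^ β * β⁻¹ * ((Real.log 2)⁻¹ + 1), ?_, ?_⟩
  · have hlog : (0:ℝ) < Real.log 2 := Real.log_pos (by norm_num)
    have h2β : (0:ℝ) < 2 ^ β := Real.rpow_pos_of_pos (by norm_num) _
    positivity
  intro ω hω0 hωmono hint
  set ω' : ℝ → ℝ := fun t => if t ≤ 0 then 0 else ω (min t 1) with hω'def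
  have hmem : ∀ {t : ℝ}, 0 < t → min t 1 ∈ Set.Ioc (0:ℝ) 1 :=
    fun {t} ht => ⟨lt_min ht one_pos, min_le_right _ _⟩
  have heq : ∀ {s : ℝ}, s ∈ Set.Ioc (0:ℝ) 1 → ω' s = ω s := by
    intro s hs
    rw [hω'def]
    simp only [not_le.2 hs.1, if_false, min_eq_left hs.2]
  have hnn' : ∀ t, 0 ≤ ω' t := by
    intro t
    rw [hω'def]
    by_cases h : t ≤ 0
    · simp [h]
    · simp only [h, if_false]
      exact hω0 _ (hmem (not_le.1 h))
  have hmono' : Monotone ω' := by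
    intro t1 t2 h12
    rw [hω'def]
    by_cases h1 : t1 ≤ 0
    · simp only [h1, if_true]
      exact hnn' t2
    · have h2 : ¬ t2 ≤ 0 := fun h => h1 (h12.trans h)
      simp only [h1, h2, if_false]
      exact hωmono (hmem (not_le.1 h1)) (hmem (not_le.1 h2))
        (min_le_min h12 (le_refl 1))
  have hint' : IntegrableOn (fun t => ω' t / t) (Set.Ioo (0:ℝ) 1) := by
    refine hint.congr_fun (fun t ht => ?_) measurableSet_Ioo
    rw [heq ⟨ht.1, ht.2.le⟩]
  have homt : ∀ t ∈ Set.Ioc (0:ℝ) 1, omTilde β ω' t = omTilde β ω t := by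
    intro t ht
    unfold omTilde
    congr 1
    refine iSup_congr fun s => iSup_congr fun hs => ?_
    rw [heq ⟨ht.1.trans_le hs.1, hs.2⟩]
  have hω'1 : ω' 1 = ω 1 := heq ⟨one_pos, le_refl 1⟩
  have hintegral_eq : (∫ t in Set.Ioo (0:ℝ) 1, omTilde β ω' t / t)
      = ∫ t in Set.Ioo (0:ℝ) 1, omTilde β ω t / t := by
    refine setIntegral_congr_fun measurableSet_Ioo fun t ht => ?_
    rw [homt t ⟨ht.1, ht.2.le⟩]
  have hωint_eq : (∫ t in Set.Ioo (0:ℝ) 1, ω' t / t)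
      = ∫ t in Set.Ioo (0:ℝ) 1, ω t / t := by
    refine setIntegral_congr_fun measurableSet_Ioo fun t ht => ?_
    rw [heq ⟨ht.1, ht.2.le⟩]
  obtain ⟨hi4, hi3⟩ := part3 hβ0 hβ1 hmono' hnn' hint'
  refine ⟨?_, ?_, ?_, ?_⟩
  · intro t ht
    have := part1 hβ0 hmono' hnn' ht
    rwa [heq ht, homt t ht] at this
  · have := part2 (ω := ω') hβ0 hmono' hnn'
    refine this.congr fun t ht => ?_
    dsimp only; rw [homt t ht]
  · rw [← hintegral_eq, ← hωint_eq, ← hω'1]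
    exact hi3
  · refine hi4.congr_fun (fun t ht => ?_) measurableSet_Ioo
    dsimp only; rw [homt t ⟨ht.1, ht.2.le⟩]


end
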